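/- arXiv:2404.11382 — 2 statements merged into one kernel-verified Lean document; each statement's English description precedes it below -/
import Mathlib

section
/- Let K ∈ ℝ^{m×n} and suppose the symmetric positive semidefinite matrices P and Y satisfy the Lyapunov equation A_K^⊤ P + P A_K + C_K^⊤ P C_K + Q + K^⊤ R K = 0 and the dual Lyapunov equation A_K Y + Y A_K^⊤ + C_K Y C_K^⊤ + Σ0 = 0, where A_K = A + BK ≠ 0. Then Tr(P Σ0) ≥ λ1(Σ0) λ1(R) ‖K‖_F² / (2(‖A‖ + ‖B‖‖K‖_F)). -/
open Matrix Filter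

attribute [local instance] Matrix.normedAddCommGroup Matrix.normedSpace

noncomputable def froNorm {p q : ℕ} (X : Matrix (Fin p) (Fin q) ℝ) : ℝ :=
  Real.sqrt (Matrix.trace (Xᵀ * X))

noncomputable def specNorm {p q : ℕ} (X : Matrix (Fin p) (Fin q) ℝ) : ℝ :=
  ‖(LinearMap.toContinuousLinearMap (Matrix.toEuclideanLin X))‖

noncomputable def minEig {p : ℕ} (M : Matrix (Fin p) (Fin p) ℝ) : ℝ :=
  sInf {r : ℝ | ∃ v : Fin p → ℝ, v ≠ 0 ∧ M.mulVec v = r • v}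

noncomputable def maxEig {p : ℕ} (M : Matrix (Fin p) (Fin p) ℝ) : ℝ :=
  sSup {r : ℝ | ∃ v : Fin p → ℝ, v ≠ 0 ∧ M.mulVec v = r • v}

def IsMSStabilizer {n m : ℕ} (A C : Matrix (Fin n) (Fin n) ℝ)
    (B D : Matrix (Fin n) (Fin m) ℝ) (K : Matrix (Fin m) (Fin n) ℝ) : Prop :=
  ∀ Y0 : Matrix (Fin n) (Fin n) ℝ, Y0.PosSemidef →
    ∀ Y : ℝ → Matrix (Fin n) (Fin n) ℝ,
      Y 0 = Y0 →
      (∀ t : ℝ, HasDerivAt Y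
        ((A + B * K) * Y t + Y t * (A + B * K)ᵀ + (C + D * K) * Y t * (C + D * K)ᵀ) t) →
      Tendsto Y atTop (nhds 0)

namespace Stmt6Aux
variable {p q r : ℕ}

lemma dot_self_nonneg (v : Fin p → ℝ) : 0 ≤ v ⬝ᵥ v :=
  Finset.sum_nonneg fun _ _ => mul_self_nonneg _

lemma dot_self_pos {v : Fin p → ℝ} (hv : v ≠ 0) : 0 < v ⬝ᵥ v :=
  (dot_self_nonneg v).lt_of_ne fun h => hv (dotProduct_self_eq_zero.mp h.symm)

lemma trace_tmul_nonneg (X : Matrix (Fin p) (Fin q) ℝ) : 0 ≤ Matrix.trace (Xᵀ * X) := by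
  refine Finset.sum_nonneg fun j _ => ?_
  rw [Matrix.diag_apply, Matrix.mul_apply]
  exact Finset.sum_nonneg fun i _ => by
    simpa [Matrix.transpose_apply] using mul_self_nonneg (X i j)

lemma froNorm_sq (X : Matrix (Fin p) (Fin q) ℝ) : froNorm X ^ 2 = Matrix.trace (Xᵀ * X) :=
  Real.sq_sqrt (trace_tmul_nonneg X)

lemma froNorm_nonneg (X : Matrix (Fin p) (Fin q) ℝ) : 0 ≤ froNorm X := Real.sqrt_nonneg _

lemma psd_trace_nonneg {M : Matrix (Fin p) (Fin p) ℝ} (hM : M.PosSemidef) :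
    0 ≤ Matrix.trace M := by
  refine Finset.sum_nonneg fun i _ => ?_
  have h := hM.dotProduct_mulVec_nonneg (Pi.single i 1)
  simpa [Matrix.diag_apply, Matrix.mulVec_single, dotProduct, Pi.single_apply] using h

lemma trace_psd_mul_nonneg {M N : Matrix (Fin p) (Fin p) ℝ}
    (hM : M.PosSemidef) (hN : N.PosSemidef) : 0 ≤ Matrix.trace (M * N) := by
  obtain ⟨F, hF⟩ : ∃ F : Matrix (Fin p) (Fin p) ℝ, N = Fᴴ * F := by
    open scoped MatrixOrder in
    obtain ⟨F, hF⟩ := CStarAlgebra.nonneg_iff_eq_star_mul_self.mp hN.nonneg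
    exact ⟨F, hF⟩
  have key : Matrix.trace (M * N) = Matrix.trace (F * M * Fᴴ) := by
    rw [hF, Matrix.trace_mul_comm, Matrix.mul_assoc, Matrix.trace_mul_comm]
  rw [key]
  exact psd_trace_nonneg (hM.mul_mul_conjTranspose_same F)

variable {M : Matrix (Fin p) (Fin p) ℝ}

lemma shifted_psd (hM : M.IsHermitian) {c : ℝ} (hc : ∀ i, c ≤ hM.eigenvalues i) :
    (M - c • 1).PosSemidef := by
  have hsub : M - c • (1 : Matrix (Fin p) (Fin p) ℝ) =
      (hM.eigenvectorUnitary : Matrix (Fin p) (Fin p) ℝ) *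
        Matrix.diagonal (fun i => hM.eigenvalues i - c) *
        (star (hM.eigenvectorUnitary : Matrix (Fin p) (Fin p) ℝ)) := by
    have h1 : c • (1 : Matrix (Fin p) (Fin p) ℝ) =
        (hM.eigenvectorUnitary : Matrix (Fin p) (Fin p) ℝ) * (c • 1) *
          (star (hM.eigenvectorUnitary : Matrix (Fin p) (Fin p) ℝ)) := by
      rw [Matrix.mul_smul, Matrix.mul_one, Matrix.smul_mul,
        (Matrix.mem_unitaryGroup_iff).mp (hM.eigenvectorUnitary).2]
    conv_lhs => rw [hM.spectral_theorem, Unitary.conjStarAlgAut_apply, h1]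
    rw [← Matrix.sub_mul, ← Matrix.mul_sub]
    congr 1
    congr 1
    ext i j
    by_cases h : i = j <;>
      simp [h, Matrix.diagonal_apply, Matrix.one_apply, Matrix.smul_apply]
  rw [hsub]
  exact (Matrix.posSemidef_diagonal_iff.mpr fun i =>
    sub_nonneg.mpr (hc i)).mul_mul_conjTranspose_same _

lemma eig_ge_of_shift_psd {c r : ℝ} (hpsd : (M - c • 1).PosSemidef)
    {v : Fin p → ℝ} (hv : v ≠ 0) (he : M.mulVec v = r • v) : c ≤ r := by
  have h := hpsd.dotProduct_mulVec_nonneg v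
  rw [Matrix.sub_mulVec, he, star_trivial, Matrix.smul_mulVec, Matrix.one_mulVec,
    dotProduct_sub, dotProduct_smul, dotProduct_smul] at h
  have hs := dot_self_pos hv
  simp only [smul_eq_mul] at h
  nlinarith

lemma minEig_spec (hp : 0 < p) (hM : M.IsHermitian) :
    (∃ v : Fin p → ℝ, v ≠ 0 ∧ M.mulVec v = minEig M • v) ∧ (M - minEig M • 1).PosSemidef := by
  haveI : Nonempty (Fin p) := ⟨⟨0, hp⟩⟩
  obtain ⟨i0, hi0⟩ := Finite.exists_min hM.eigenvalues
  set c := hM.eigenvalues i0 with hc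
  have hpsd : (M - c • 1).PosSemidef := shifted_psd hM hi0
  have hvne : (⇑(hM.eigenvectorBasis i0) : Fin p → ℝ) ≠ 0 := by
    intro h
    exact hM.eigenvectorBasis.orthonormal.ne_zero i0 (by ext j; exact congrFun h j)
  have hmem : c ∈ {r : ℝ | ∃ v : Fin p → ℝ, v ≠ 0 ∧ M.mulVec v = r • v} :=
    ⟨_, hvne, hM.mulVec_eigenvectorBasis i0⟩
  have hlb : ∀ r ∈ {r : ℝ | ∃ v : Fin p → ℝ, v ≠ 0 ∧ M.mulVec v = r • v}, c ≤ r := by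
    rintro r ⟨v, hv, he⟩
    exact eig_ge_of_shift_psd hpsd hv he
  have hEq : minEig M = c :=
    le_antisymm (csInf_le ⟨c, hlb⟩ hmem) (le_csInf ⟨c, hmem⟩ hlb)
  rw [hEq]
  exact ⟨hmem, hpsd⟩

lemma minEig_pos (hp : 0 < p) (hM : M.PosDef) : 0 < minEig M := by
  obtain ⟨⟨v, hv, he⟩, -⟩ := minEig_spec hp hM.1
  have h := hM.dotProduct_mulVec_pos hv
  rw [he, star_trivial, dotProduct_smul] at h
  have hs := dot_self_pos hv
  simp only [smul_eq_mul] at h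
  nlinarith

lemma specNorm_nonneg (X : Matrix (Fin p) (Fin q) ℝ) : 0 ≤ specNorm X := norm_nonneg _

lemma specNorm_add_le (X Y : Matrix (Fin p) (Fin q) ℝ) :
    specNorm (X + Y) ≤ specNorm X + specNorm Y := by
  unfold specNorm
  rw [map_add, map_add]
  exact norm_add_le _ _

lemma specNorm_mul_le (X : Matrix (Fin p) (Fin q) ℝ) (Y : Matrix (Fin q) (Fin r) ℝ) :
    specNorm (X * Y) ≤ specNorm X * specNorm Y := by
  unfold specNorm
  have hcomp : (LinearMap.toContinuousLinearMap (Matrix.toEuclideanLin (X * Y))) =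
      (LinearMap.toContinuousLinearMap (Matrix.toEuclideanLin X)).comp
        (LinearMap.toContinuousLinearMap (Matrix.toEuclideanLin Y)) := by
    ext1 x
    exact congrArg (WithLp.toLp 2) congr($(Matrix.toLin'_mul X Y) ((WithLp.equiv 2 (Fin r → ℝ)) x))
  rw [hcomp]
  exact ContinuousLinearMap.opNorm_comp_le _ _

lemma specNorm_pos {X : Matrix (Fin p) (Fin q) ℝ} (hX : X ≠ 0) : 0 < specNorm X := by
  unfold specNorm
  rw [norm_pos_iff]
  intro h
  apply hX
  have h2 : Matrix.toEuclideanLin X = 0 := by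
    apply LinearMap.coe_injective
    exact congrArg LinearMap.toContinuousLinearMap.symm h ▸ (by
      simp [LinearEquiv.symm_apply_apply] :
        (⇑(Matrix.toEuclideanLin X) : _) =
          ⇑((LinearMap.toContinuousLinearMap.symm)
            (LinearMap.toContinuousLinearMap (Matrix.toEuclideanLin X))))
  exact Matrix.toEuclideanLin.map_eq_zero_iff.mp h2

lemma dot_eq_inner (v w : Fin p → ℝ) :
    v ⬝ᵥ w = @inner ℝ _ _ ((WithLp.equiv 2 (Fin p → ℝ)).symm v)
      ((WithLp.equiv 2 (Fin p → ℝ)).symm w) := by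
  simp [PiLp.inner_apply, dotProduct, RCLike.inner_apply, mul_comm]

lemma abs_dot_mulVec_le (X : Matrix (Fin p) (Fin p) ℝ) (v : Fin p → ℝ) :
    |v ⬝ᵥ (X *ᵥ v)| ≤ specNorm X * (v ⬝ᵥ v) := by
  set x : EuclideanSpace ℝ (Fin p) := (WithLp.equiv 2 (Fin p → ℝ)).symm v with hx
  have h1 : v ⬝ᵥ (X *ᵥ v) =
      @inner ℝ _ _ x ((LinearMap.toContinuousLinearMap (Matrix.toEuclideanLin X)) x) := by
    rw [dot_eq_inner]
    congr 1
  have h2 := abs_real_inner_le_norm x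
    ((LinearMap.toContinuousLinearMap (Matrix.toEuclideanLin X)) x)
  have h3 := (LinearMap.toContinuousLinearMap (Matrix.toEuclideanLin X)).le_opNorm x
  have h4 : ‖x‖ * ‖x‖ = v ⬝ᵥ v := by
    rw [← real_inner_self_eq_norm_mul_norm, dot_eq_inner]
  rw [h1]
  calc |@inner ℝ _ _ x ((LinearMap.toContinuousLinearMap (Matrix.toEuclideanLin X)) x)|
      ≤ ‖x‖ * ‖(LinearMap.toContinuousLinearMap (Matrix.toEuclideanLin X)) x‖ := h2
    _ ≤ ‖x‖ * (specNorm X * ‖x‖) := mul_le_mul_of_nonneg_left h3 (norm_nonneg x)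
    _ = specNorm X * (‖x‖ * ‖x‖) := by ring
    _ = specNorm X * (v ⬝ᵥ v) := by rw [h4]

lemma specNorm_le_froNorm (X : Matrix (Fin p) (Fin q) ℝ) : specNorm X ≤ froNorm X := by
  apply ContinuousLinearMap.opNorm_le_bound _ (Real.sqrt_nonneg _)
  intro x
  set v : Fin q → ℝ := (WithLp.equiv 2 (Fin q → ℝ)) x with hv
  have hXx : (LinearMap.toContinuousLinearMap (Matrix.toEuclideanLin X)) x =
      (WithLp.equiv 2 (Fin p → ℝ)).symm (X *ᵥ v) := rfl
  rw [hXx]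
  have hnx : ‖x‖ = Real.sqrt (∑ j, v j ^ 2) := by
    rw [EuclideanSpace.norm_eq]
    congr 1
    refine Finset.sum_congr rfl fun j _ => ?_
    rw [Real.norm_eq_abs, sq_abs]
    rfl
  have hny : ‖(WithLp.equiv 2 (Fin p → ℝ)).symm (X *ᵥ v)‖ =
      Real.sqrt (∑ i, ((X *ᵥ v) i) ^ 2) := by
    rw [EuclideanSpace.norm_eq]
    congr 1
    refine Finset.sum_congr rfl fun i _ => ?_
    rw [Real.norm_eq_abs, sq_abs]
    rfl
  rw [hny, hnx, ← Real.sqrt_mul (trace_tmul_nonneg X)]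
  apply Real.sqrt_le_sqrt
  have htr : Matrix.trace (Xᵀ * X) = ∑ i, ∑ j, (X i j) ^ 2 := by
    rw [Matrix.trace]
    simp_rw [Matrix.diag_apply, Matrix.mul_apply, Matrix.transpose_apply, ← sq]
    exact Finset.sum_comm
  calc ∑ i, ((X *ᵥ v) i) ^ 2
      ≤ ∑ i, (∑ j, X i j ^ 2) * (∑ j, v j ^ 2) := by
        refine Finset.sum_le_sum fun i _ => ?_
        show ((X.mulVec v) i) ^ 2 ≤ _
        rw [Matrix.mulVec, dotProduct]
        exact Finset.sum_mul_sq_le_sq_mul_sq Finset.univ (X i) v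
    _ = (∑ i, ∑ j, X i j ^ 2) * (∑ j, v j ^ 2) := (Finset.sum_mul _ _ _).symm
    _ = Matrix.trace (Xᵀ * X) * ∑ j, v j ^ 2 := by rw [htr]

end Stmt6Aux

set_option maxHeartbeats 1000000 in
open Stmt6Aux in
/-- lower bound Tr(PSig0) ≥ λ1(Sig0)λ1(R)‖K‖_F² / (2(‖A‖+‖B‖‖K‖_F)). -/
theorem stmt6 {n m : ℕ} (hn : 0 < n) (hm : 0 < m)
    (A C Q Sig0 : Matrix (Fin n) (Fin n) ℝ) (B D : Matrix (Fin n) (Fin m) ℝ)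
    (R : Matrix (Fin m) (Fin m) ℝ)
    (hQ : Q.PosDef) (hR : R.PosDef) (hSig : Sig0.PosDef)
    (K : Matrix (Fin m) (Fin n) ℝ) (hAK : A + B * K ≠ 0)
    (P Y : Matrix (Fin n) (Fin n) ℝ) (hPsd : P.PosSemidef) (hYsd : Y.PosSemidef)
    (hP : (A + B * K)ᵀ * P + P * (A + B * K) + (C + D * K)ᵀ * P * (C + D * K)
        + Q + Kᵀ * R * K = 0)
    (hY : (A + B * K) * Y + Y * (A + B * K)ᵀ + (C + D * K) * Y * (C + D * K)ᵀ + Sig0 = 0) :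
    Matrix.trace (P * Sig0) ≥
      minEig Sig0 * minEig R * froNorm K ^ 2 / (2 * (specNorm A + specNorm B * froNorm K)) := by
  set AK := A + B * K with hAKdef
  set CK := C + D * K with hCKdef
  -- eigen data
  obtain ⟨-, hRshift⟩ := minEig_spec hm hR.1
  obtain ⟨-, hSshift⟩ := minEig_spec hn hSig.1
  obtain ⟨⟨v, hv, hYv⟩, hYshift⟩ := minEig_spec hn hYsd.1
  have hlR : 0 < minEig R := minEig_pos hm hR
  have hlS : 0 < minEig Sig0 := minEig_pos hn hSig
  set ν := minEig Y with hνdef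
  have hs : 0 < v ⬝ᵥ v := dot_self_pos hv
  have hν0 : 0 ≤ ν := by
    have h := hYsd.dotProduct_mulVec_nonneg v
    rw [hYv, star_trivial, dotProduct_smul] at h
    simp only [smul_eq_mul] at h
    nlinarith
  -- transpose facts
  have hYt : Yᵀ = Y := (Matrix.conjTranspose_eq_transpose_of_trivial Y).symm.trans hYsd.1
  have hCKconj : CKᴴ = CKᵀ := Matrix.conjTranspose_eq_transpose_of_trivial _
  have hKconj : Kᴴ = Kᵀ := Matrix.conjTranspose_eq_transpose_of_trivial _
  -- key scalar inequality: minEig Sig0 ≤ 2 * ν * specNorm AK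
  set a := specNorm AK with hadef
  have ha : 0 < a := specNorm_pos hAK
  set t := v ⬝ᵥ (AK *ᵥ v) with htdef
  have hvec := congrArg (fun M : Matrix (Fin n) (Fin n) ℝ => v ⬝ᵥ (M *ᵥ v)) hY
  simp only [Matrix.add_mulVec, dotProduct_add, Matrix.zero_mulVec, dotProduct_zero] at hvec
  have hT1 : v ⬝ᵥ ((AK * Y) *ᵥ v) = ν * t := by
    rw [← Matrix.mulVec_mulVec, hYv, Matrix.mulVec_smul, dotProduct_smul, smul_eq_mul]
  have hT2 : v ⬝ᵥ ((Y * AKᵀ) *ᵥ v) = ν * t := by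
    rw [← Matrix.mulVec_mulVec, dotProduct_mulVec, ← Matrix.mulVec_transpose, hYt, hYv,
      smul_dotProduct, smul_eq_mul]
    congr 1
    rw [Matrix.mulVec_transpose, dotProduct_comm, ← dotProduct_mulVec]
  have hT3 : 0 ≤ v ⬝ᵥ ((CK * Y * CKᵀ) *ᵥ v) := by
    have hpsd := hYsd.mul_mul_conjTranspose_same CK
    rw [hCKconj] at hpsd
    simpa [star_trivial] using hpsd.dotProduct_mulVec_nonneg v
  have hT4 : minEig Sig0 * (v ⬝ᵥ v) ≤ v ⬝ᵥ (Sig0 *ᵥ v) := by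
    have h := hSshift.dotProduct_mulVec_nonneg v
    rw [star_trivial, Matrix.sub_mulVec, Matrix.smul_mulVec, Matrix.one_mulVec,
      dotProduct_sub, dotProduct_smul, smul_eq_mul] at h
    linarith
  have hkey : minEig Sig0 ≤ 2 * ν * a := by
    rw [hT1, hT2] at hvec
    have habs := abs_dot_mulVec_le AK v
    rw [← htdef] at habs
    have h1 : -t ≤ |t| := neg_le_abs t
    have h2 : minEig Sig0 * (v ⬝ᵥ v) ≤ 2 * ν * (-t) := by linarith
    have h3 : 2 * ν * (-t) ≤ 2 * ν * (a * (v ⬝ᵥ v)) := by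
      have : -t ≤ a * (v ⬝ᵥ v) := le_trans h1 habs
      nlinarith
    nlinarith
  -- trace identity
  have h1 : Sig0 = -(AK * Y + Y * AKᵀ + CK * Y * CKᵀ) := by
    rw [eq_neg_iff_add_eq_zero, ← hY]
    abel
  have h2 : Q + Kᵀ * R * K = -(AKᵀ * P + P * AK + CKᵀ * P * CK) := by
    rw [eq_neg_iff_add_eq_zero, ← hP]
    abel
  have e1 : Matrix.trace (P * (AK * Y)) = Matrix.trace ((P * AK) * Y) := by
    rw [Matrix.mul_assoc]
  have e2 : Matrix.trace (P * (Y * AKᵀ)) = Matrix.trace ((AKᵀ * P) * Y) := by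
    rw [← Matrix.mul_assoc, Matrix.trace_mul_cycle P Y AKᵀ, Matrix.mul_assoc]
  have e3 : Matrix.trace (P * (CK * Y * CKᵀ)) = Matrix.trace ((CKᵀ * P * CK) * Y) := by
    rw [← Matrix.mul_assoc, Matrix.trace_mul_cycle P (CK * Y) CKᵀ]
    simp only [Matrix.mul_assoc]
  have htrace : Matrix.trace (P * Sig0) =
      Matrix.trace (Q * Y) + Matrix.trace ((Kᵀ * R * K) * Y) := by
    have lhs1 : Matrix.trace (P * Sig0) =
        -(Matrix.trace (P * (AK * Y)) + Matrix.trace (P * (Y * AKᵀ))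
          + Matrix.trace (P * (CK * Y * CKᵀ))) := by
      rw [h1]
      simp [mul_add, mul_neg, Matrix.trace_add, Matrix.trace_neg]
    have rhs1 : Matrix.trace (Q * Y) + Matrix.trace ((Kᵀ * R * K) * Y) =
        -(Matrix.trace ((AKᵀ * P) * Y) + Matrix.trace ((P * AK) * Y)
          + Matrix.trace ((CKᵀ * P * CK) * Y)) := by
      rw [← Matrix.trace_add, ← Matrix.add_mul, h2]
      simp [add_mul, neg_mul, Matrix.trace_add, Matrix.trace_neg]
    rw [lhs1, rhs1, e1, e2, e3]
    ring
  -- lower bounds on the trace terms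
  have hQY : 0 ≤ Matrix.trace (Q * Y) := trace_psd_mul_nonneg hQ.posSemidef hYsd
  have hSmat : (K * Y * Kᵀ).PosSemidef := by
    have := hYsd.mul_mul_conjTranspose_same K
    rwa [hKconj] at this
  have htrS : 0 ≤ Matrix.trace (K * Y * Kᵀ) := psd_trace_nonneg hSmat
  have hcyc : Matrix.trace ((Kᵀ * R * K) * Y) = Matrix.trace (R * (K * Y * Kᵀ)) := by
    rw [show (Kᵀ * R * K) * Y = Kᵀ * (R * K * Y) by simp only [Matrix.mul_assoc],
      Matrix.trace_mul_comm Kᵀ (R * K * Y),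
      show (R * K * Y) * Kᵀ = R * (K * Y * Kᵀ) by simp only [Matrix.mul_assoc]]
  have hRS : minEig R * Matrix.trace (K * Y * Kᵀ) ≤ Matrix.trace (R * (K * Y * Kᵀ)) := by
    have h := trace_psd_mul_nonneg hRshift hSmat
    rw [Matrix.sub_mul, Matrix.smul_mul, Matrix.one_mul, Matrix.trace_sub, Matrix.trace_smul,
      smul_eq_mul] at h
    linarith
  have hKYK : ν * Matrix.trace (K * Kᵀ) ≤ Matrix.trace (K * Y * Kᵀ) := by
    have hpsd := hYshift.mul_mul_conjTranspose_same K
    rw [hKconj] at hpsd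
    have h := psd_trace_nonneg hpsd
    rw [Matrix.mul_sub, Matrix.mul_smul, Matrix.mul_one, Matrix.sub_mul, Matrix.smul_mul,
      Matrix.trace_sub, Matrix.trace_smul, smul_eq_mul] at h
    linarith
  have hKK : Matrix.trace (K * Kᵀ) = froNorm K ^ 2 := by
    rw [froNorm_sq, Matrix.trace_mul_comm]
  -- assemble
  set k := froNorm K with hkdef
  have hk0 : 0 ≤ k := froNorm_nonneg K
  have hmain : minEig R * (ν * k ^ 2) ≤ Matrix.trace (P * Sig0) := by
    rw [htrace, hcyc]
    have h5 : ν * k ^ 2 ≤ Matrix.trace (K * Y * Kᵀ) := by rw [← hKK]; exact hKYK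
    have h6 : minEig R * (ν * k ^ 2) ≤ minEig R * Matrix.trace (K * Y * Kᵀ) :=
      mul_le_mul_of_nonneg_left h5 hlR.le
    linarith
  -- denominator comparison
  have had : a ≤ specNorm A + specNorm B * k := by
    calc a ≤ specNorm A + specNorm (B * K) := specNorm_add_le A (B * K)
      _ ≤ specNorm A + specNorm B * specNorm K := by
          linarith [specNorm_mul_le B K]
      _ ≤ specNorm A + specNorm B * k := by
          have h1 := specNorm_le_froNorm K
          have h2 := mul_le_mul_of_nonneg_left h1 (specNorm_nonneg B)
          linarith
  have hd : 0 < 2 * (specNorm A + specNorm B * k) := by linarith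
  rw [ge_iff_le, div_le_iff₀ hd]
  set d2 := 2 * (specNorm A + specNorm B * k) with hd2def
  have hRk : (0:ℝ) ≤ minEig R * k ^ 2 := mul_nonneg hlR.le (sq_nonneg k)
  have hstep1 : minEig Sig0 * minEig R * k ^ 2 ≤ (2 * ν * a) * (minEig R * k ^ 2) := by
    have := mul_le_mul_of_nonneg_right hkey hRk
    linarith [this]
  have hstep2 : (2 * ν * a) * (minEig R * k ^ 2) ≤ d2 * (ν * (minEig R * k ^ 2)) := by
    have h := mul_le_mul_of_nonneg_right had (mul_nonneg hν0 hRk)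
    calc (2 * ν * a) * (minEig R * k ^ 2)
        = 2 * (a * (ν * (minEig R * k ^ 2))) := by ring
      _ ≤ 2 * ((specNorm A + specNorm B * k) * (ν * (minEig R * k ^ 2))) := by linarith
      _ = d2 * (ν * (minEig R * k ^ 2)) := by rw [hd2def]; ring
  have hstep3 : d2 * (ν * (minEig R * k ^ 2)) ≤ d2 * Matrix.trace (P * Sig0) := by
    apply mul_le_mul_of_nonneg_left _ hd.le
    calc ν * (minEig R * k ^ 2) = minEig R * (ν * k ^ 2) := by ring
      _ ≤ Matrix.trace (P * Sig0) := hmain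
  calc minEig Sig0 * minEig R * k ^ 2
      ≤ (2 * ν * a) * (minEig R * k ^ 2) := hstep1
    _ ≤ d2 * (ν * (minEig R * k ^ 2)) := hstep2
    _ ≤ d2 * Matrix.trace (P * Sig0) := hstep3
    _ = Matrix.trace (P * Sig0) * d2 := by ring
end

section
/- Every stationary point of J on 𝒦 is globally optimal: if K ∈ 𝒦 satisfies ∇J(K) = 0, then J(K) ≤ J(K') for every K' ∈ 𝒦. -/
open Matrix Filter

attribute [local instance] Matrix.normedAddCommGroup Matrix.normedSpace

section AuxStmt11

lemma psd_diag_nonneg' {p : ℕ} {M : Matrix (Fin p) (Fin p) ℝ} (hM : M.PosSemidef) (i : Fin p) :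
    0 ≤ M i i := by
  simpa [dotProduct_single, Matrix.mulVec_single] using hM.dotProduct_mulVec_nonneg (Pi.single i 1)

lemma psd_trace_nonneg' {p : ℕ} {M : Matrix (Fin p) (Fin p) ℝ} (hM : M.PosSemidef) :
    0 ≤ M.trace := Finset.sum_nonneg fun i _ => psd_diag_nonneg' hM i

lemma psd_trace_mul_nonneg' {p : ℕ} {S Y : Matrix (Fin p) (Fin p) ℝ}
    (hS : S.PosSemidef) (hY : Y.PosSemidef) : 0 ≤ (S * Y).trace := by
  obtain ⟨B, rfl⟩ : ∃ B : Matrix (Fin p) (Fin p) ℝ, Y = Bᴴ * B := by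
    open scoped MatrixOrder in
    exact CStarAlgebra.nonneg_iff_eq_star_mul_self.mp hY.nonneg
  rw [show S * (Bᴴ * B) = (S * Bᴴ) * B by rw [Matrix.mul_assoc],
    Matrix.trace_mul_comm, ← Matrix.mul_assoc]
  exact psd_trace_nonneg' (hS.mul_mul_conjTranspose_same B)

lemma trace_dual' {p : ℕ} (X Y A' C' : Matrix (Fin p) (Fin p) ℝ) :
    Matrix.trace ((A'ᵀ * X + X * A' + C'ᵀ * X * C') * Y)
      = Matrix.trace (X * (A' * Y + Y * A'ᵀ + C' * Y * C'ᵀ)) := by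
  simp only [Matrix.add_mul, Matrix.mul_add, Matrix.trace_add, Matrix.mul_assoc]
  rw [Matrix.trace_mul_comm A'ᵀ, Matrix.trace_mul_comm C'ᵀ]
  simp only [Matrix.mul_assoc]
  ring

lemma lyap_posDef' {p : ℕ} {AK CK Y S0 : Matrix (Fin p) (Fin p) ℝ}
    (hY : Y.PosSemidef) (hSig : S0.PosDef)
    (heq : AK * Y + Y * AKᵀ + CK * Y * CKᵀ + S0 = 0) : Y.PosDef := by
  refine Matrix.PosDef.of_dotProduct_mulVec_pos hY.isHermitian fun v hv => ?_
  rcases (hY.dotProduct_mulVec_nonneg v).lt_or_eq with h | h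
  · exact h
  exfalso
  have hm : Y.mulVec v = 0 := (hY.dotProduct_mulVec_zero_iff v).mp h.symm
  have hYt : Yᵀ = Y := by
    have h2 : Yᴴ = Y := hY.isHermitian
    rwa [Matrix.conjTranspose_eq_transpose_of_trivial] at h2
  have hall := congrArg (fun M : Matrix (Fin p) (Fin p) ℝ => star v ⬝ᵥ M.mulVec v) heq
  simp only [Matrix.add_mulVec, dotProduct_add, Matrix.zero_mulVec,
    dotProduct_zero] at hall
  have t1 : star v ⬝ᵥ (AK * Y).mulVec v = 0 := by
    rw [← Matrix.mulVec_mulVec, hm, Matrix.mulVec_zero, dotProduct_zero]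
  have t2 : star v ⬝ᵥ (Y * AKᵀ).mulVec v = 0 := by
    rw [← Matrix.mulVec_mulVec, Matrix.dotProduct_mulVec, star_trivial,
      ← Matrix.mulVec_transpose, hYt, hm, zero_dotProduct]
  have t3 : 0 ≤ star v ⬝ᵥ (CK * Y * CKᵀ).mulVec v := by
    have hpsd := hY.mul_mul_conjTranspose_same CK
    rw [Matrix.conjTranspose_eq_transpose_of_trivial] at hpsd
    exact hpsd.dotProduct_mulVec_nonneg v
  have t4 : 0 < star v ⬝ᵥ S0.mulVec v := hSig.dotProduct_mulVec_pos hv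
  rw [t1, t2] at hall
  linarith

end AuxStmt11

/-- every stationary point of J on 𝒦 is globally optimal. -/
theorem stmt11 {n m : ℕ} (hn : 0 < n) (hm : 0 < m)
    (A C Q Sig0 : Matrix (Fin n) (Fin n) ℝ) (B D : Matrix (Fin n) (Fin m) ℝ)
    (R : Matrix (Fin m) (Fin m) ℝ)
    (hQ : Q.PosDef) (hR : R.PosDef) (hSig : Sig0.PosDef)
    (P : Matrix (Fin m) (Fin n) ℝ → Matrix (Fin n) (Fin n) ℝ)
    (hP : ∀ K : Matrix (Fin m) (Fin n) ℝ, IsMSStabilizer A C B D K →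
      (P K).PosSemidef ∧
      (A + B * K)ᵀ * P K + P K * (A + B * K) + (C + D * K)ᵀ * P K * (C + D * K)
        + Q + Kᵀ * R * K = 0)
    (Yf : Matrix (Fin m) (Fin n) ℝ → Matrix (Fin n) (Fin n) ℝ)
    (hYf : ∀ K : Matrix (Fin m) (Fin n) ℝ, IsMSStabilizer A C B D K →
      (Yf K).PosSemidef ∧
      (A + B * K) * Yf K + Yf K * (A + B * K)ᵀ + (C + D * K) * Yf K * (C + D * K)ᵀ
        + Sig0 = 0)
    (J : Matrix (Fin m) (Fin n) ℝ → ℝ)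
    (hJ : ∀ K : Matrix (Fin m) (Fin n) ℝ, IsMSStabilizer A C B D K →
      J K = Matrix.trace (P K * Sig0))
    (K : Matrix (Fin m) (Fin n) ℝ) (hK : IsMSStabilizer A C B D K)
    (hstat : (2 : ℝ) • ((R * K + Bᵀ * P K + Dᵀ * P K * (C + D * K)) * Yf K) = 0) :
    ∀ K' : Matrix (Fin m) (Fin n) ℝ, IsMSStabilizer A C B D K' → J K ≤ J K' := by
  intro K' hK'
  obtain ⟨hP1psd, hP1eq⟩ := hP K hK
  obtain ⟨hP2psd, hP2eq⟩ := hP K' hK'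
  obtain ⟨hY1psd, hY1eq⟩ := hYf K hK
  obtain ⟨hY2psd, hY2eq⟩ := hYf K' hK'
  set P1 := P K with hP1def
  set P2 := P K' with hP2def
  set Y1 := Yf K with hY1def
  set Y2 := Yf K' with hY2def
  have hP1t : P1ᵀ = P1 := by
    have h2 : P1ᴴ = P1 := hP1psd.isHermitian
    rwa [Matrix.conjTranspose_eq_transpose_of_trivial] at h2
  have hRt : Rᵀ = R := by
    have h2 : Rᴴ = R := hR.isHermitian
    rwa [Matrix.conjTranspose_eq_transpose_of_trivial] at h2
  have hY1pd : Y1.PosDef := lyap_posDef' hY1psd hSig hY1eq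
  set E := R * K + Bᵀ * P1 + Dᵀ * P1 * (C + D * K) with hEdef
  have hEY : E * Y1 = 0 := by
    have h2 := hstat
    rw [smul_eq_zero] at h2
    rcases h2 with h | h
    · norm_num at h
    · exact h
  have hE0 : E = 0 := by
    have hdet : IsUnit Y1.det := isUnit_iff_ne_zero.mpr (ne_of_gt hY1pd.det_pos)
    calc E = E * (Y1 * Y1⁻¹) := by rw [Matrix.mul_nonsing_inv _ hdet, Matrix.mul_one]
      _ = (E * Y1) * Y1⁻¹ := by rw [Matrix.mul_assoc]
      _ = 0 := by rw [hEY, Matrix.zero_mul]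
  obtain ⟨Dl, hDl⟩ : ∃ Dl, K' = K + Dl := ⟨K' - K, by abel⟩
  set S := Dlᵀ * (R + Dᵀ * P1 * D) * Dl with hSdef
  have key4 : (A + B * K')ᵀ * P1 + P1 * (A + B * K')
      + (C + D * K')ᵀ * P1 * (C + D * K') + Q + K'ᵀ * R * K' = S := by
    rw [hDl]
    have expand : (A + B * (K + Dl))ᵀ * P1 + P1 * (A + B * (K + Dl))
        + (C + D * (K + Dl))ᵀ * P1 * (C + D * (K + Dl)) + Q + (K + Dl)ᵀ * R * (K + Dl)
        = ((A + B * K)ᵀ * P1 + P1 * (A + B * K)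
            + (C + D * K)ᵀ * P1 * (C + D * K) + Q + Kᵀ * R * K)
          + Dlᵀ * E + Eᵀ * Dl + S := by
      simp only [hEdef, hSdef, Matrix.transpose_add, Matrix.transpose_mul,
        Matrix.transpose_transpose, hP1t, hRt, Matrix.add_mul, Matrix.mul_add,
        Matrix.mul_assoc]
      abel
    rw [expand, hP1eq, hE0]
    simp
  have hS' : (A + B * K')ᵀ * (P2 - P1) + (P2 - P1) * (A + B * K')
      + (C + D * K')ᵀ * (P2 - P1) * (C + D * K') = -S := by
    have hdiff : (A + B * K')ᵀ * (P2 - P1) + (P2 - P1) * (A + B * K')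
        + (C + D * K')ᵀ * (P2 - P1) * (C + D * K')
        = ((A + B * K')ᵀ * P2 + P2 * (A + B * K')
            + (C + D * K')ᵀ * P2 * (C + D * K') + Q + K'ᵀ * R * K')
          - ((A + B * K')ᵀ * P1 + P1 * (A + B * K')
            + (C + D * K')ᵀ * P1 * (C + D * K') + Q + K'ᵀ * R * K') := by
      noncomm_ring
    rw [hdiff, hP2eq, key4, zero_sub]
  have hSig0 : Sig0 = -((A + B * K') * Y2 + Y2 * (A + B * K')ᵀ
      + (C + D * K') * Y2 * (C + D * K')ᵀ) := by
    rw [eq_neg_iff_add_eq_zero, add_comm]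
    exact hY2eq
  have h5 : Matrix.trace ((P2 - P1) * Sig0) = Matrix.trace (S * Y2) := by
    calc Matrix.trace ((P2 - P1) * Sig0)
        = -Matrix.trace ((P2 - P1) * ((A + B * K') * Y2 + Y2 * (A + B * K')ᵀ
            + (C + D * K') * Y2 * (C + D * K')ᵀ)) := by
          rw [hSig0, Matrix.mul_neg, Matrix.trace_neg]
      _ = -Matrix.trace (((A + B * K')ᵀ * (P2 - P1) + (P2 - P1) * (A + B * K')
            + (C + D * K')ᵀ * (P2 - P1) * (C + D * K')) * Y2) := by
          rw [trace_dual']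
      _ = Matrix.trace (S * Y2) := by rw [hS']; simp
  have hMpsd : (R + Dᵀ * P1 * D).PosSemidef := by
    have h1 := hP1psd.conjTranspose_mul_mul_same D
    rw [Matrix.conjTranspose_eq_transpose_of_trivial] at h1
    exact hR.posSemidef.add h1
  have hSpsd : S.PosSemidef := by
    have h1 := hMpsd.conjTranspose_mul_mul_same Dl
    rwa [Matrix.conjTranspose_eq_transpose_of_trivial] at h1
  have htr : 0 ≤ Matrix.trace (S * Y2) := psd_trace_mul_nonneg' hSpsd hY2psd
  rw [hJ K hK, hJ K' hK']
  have hsplit : Matrix.trace ((P2 - P1) * Sig0)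
      = Matrix.trace (P2 * Sig0) - Matrix.trace (P1 * Sig0) := by
    rw [Matrix.sub_mul, Matrix.trace_sub]
  linarith
end
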